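/- arXiv:alg-geom/9611006 — 3 statements merged into one kernel-verified Lean document; each statement's English description precedes it below -/
import Mathlib

section
/- Let $I_n \subset \mathbb{Z}[X_1,\ldots,X_n]$ be the ideal generated by the elementary symmetric polynomials $e_1,\ldots,e_n$. If $w \in S^{(n)} \setminus S_n$ (i.e. $w(n+1) < w(n+2) < \cdots$ but $w \notin S_n$), then the Schubert polynomial $\mathfrak{S}_w$ lies in $I_n$. -/
/-!
Induct on the length of `w` inside some `S_m`. If `w` has an ascent `w i < w (i+1)` with
`i + 1 < n`, then `𝔖_w = ∂_i 𝔖_{w s_i}`, where `w s_i` is longer and still lies in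
`S^{(n)} \ S_n`, and `∂_i` maps `I_n` into itself because `∂_i (e_k f) = e_k ∂_i f` for the
`s_i`-symmetric generators `e_k`. Otherwise `w` decreases on `{0, …, n-1}` and increases
afterwards, so its code `(w 0, …, w (n-1), 0, …)` is weakly decreasing and `𝔖_w = ∏ X_q^{w q}`.
Since `w ∉ S_n` forces `w 0 ≥ n`, this is divisible by `X_0^n`, which lies in `I_n` by Vieta's
formula applied to `∏_{j<n} (X_0 - X_j) = 0`.
-/

open MvPolynomial Finset

noncomputable section

/-- The length (number of inversions) of a permutation of `ℕ`. -/
def permLength (w : Equiv.Perm ℕ) : ℕ :=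
  Nat.card {p : ℕ × ℕ // p.1 < p.2 ∧ w p.2 < w p.1}

/-- `w` belongs to `S_n` (0-indexed): it fixes every `i ≥ n`. -/
def memSn (n : ℕ) (w : Equiv.Perm ℕ) : Prop :=
  ∀ i, n ≤ i → w i = i

/-- `w` belongs to `S_∞`: it fixes all but finitely many points. -/
def finSupp (w : Equiv.Perm ℕ) : Prop :=
  ∃ n, memSn n w

/-- The longest element of `S_n`: `i ↦ n - 1 - i` on `{0, …, n-1}`, identity elsewhere. -/
def w0 (n : ℕ) : Equiv.Perm ℕ :=
  Function.Involutive.toPerm (fun i => if i < n then n - 1 - i else i)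
    (by intro i; dsimp only; split_ifs <;> omega)

/-- The staircase monomial `X_0^{n-1} X_1^{n-2} ⋯ X_{n-2}`. -/
def staircase (n : ℕ) : MvPolynomial ℕ ℤ :=
  ∏ i ∈ Finset.range n, X i ^ (n - 1 - i)

/-- Divided difference operators and Schubert polynomials, packaged with their defining
properties: `D i` is the divided difference `∂_i f = (f - s_i f)/(X_i - X_{i+1})`,
`Dw` is `∂_w` (defined through reduced words), and the Schubert polynomial is
`𝔖_w = ∂_{w⁻¹ w₀} (X_0^{n-1} X_1^{n-2} ⋯)` for `w ∈ S_n` (compatibly with the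
inclusions `S_n ⊆ S_{n+1}`). -/
structure SchubertData where
  D : ℕ → MvPolynomial ℕ ℤ → MvPolynomial ℕ ℤ
  hD : ∀ i f, (X i - X (i + 1)) * D i f = f - rename (⇑(Equiv.swap i (i + 1))) f
  Dw : Equiv.Perm ℕ → MvPolynomial ℕ ℤ → MvPolynomial ℕ ℤ
  Dw_one : Dw 1 = id
  Dw_step : ∀ w i, permLength (w * Equiv.swap i (i + 1)) = permLength w + 1 →
    Dw (w * Equiv.swap i (i + 1)) = Dw w ∘ D i
  S : Equiv.Perm ℕ → MvPolynomial ℕ ℤ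
  hS : ∀ n w, memSn n w → S w = Dw (w⁻¹ * w0 n) (staircase n)

/-- The `k`-th elementary symmetric polynomial in the variables `X_0, …, X_{n-1}`. -/
def esymmN (n k : ℕ) : MvPolynomial ℕ ℤ :=
  ∑ s ∈ Finset.powersetCard k (Finset.range n), ∏ i ∈ s, X i

/-- The ideal `I_n = ⟨e_1, …, e_n⟩` of `ℤ[X_0, X_1, …]`. -/
def In (n : ℕ) : Ideal (MvPolynomial ℕ ℤ) :=
  Ideal.span {p | ∃ k, 1 ≤ k ∧ k ≤ n ∧ p = esymmN n k}

/-- The embedding of `S_n = Perm (Fin n)` into `Perm ℕ`. -/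
def embedPerm (n : ℕ) (u : Equiv.Perm (Fin n)) : Equiv.Perm ℕ :=
  u.extendDomain Fin.equivSubtype

namespace Schubert

abbrev adjSwap (i : ℕ) : Equiv.Perm ℕ := Equiv.swap i (i + 1)

lemma adjSwap_apply (i x : ℕ) :
    adjSwap i x = if x = i then i + 1 else if x = i + 1 then i else x :=
  Equiv.swap_apply_def i (i + 1) x

lemma adjSwap_apply_of_ne {i x : ℕ} (h₁ : x ≠ i) (h₂ : x ≠ i + 1) : adjSwap i x = x :=
  Equiv.swap_apply_of_ne_of_ne h₁ h₂

lemma adjSwap_inv (i : ℕ) : (adjSwap i)⁻¹ = adjSwap i := Equiv.swap_inv _ _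

lemma adjSwap_mul_self (i : ℕ) : adjSwap i * adjSwap i = 1 := Equiv.swap_mul_self _ _

lemma mul_adjSwap_apply_left (w : Equiv.Perm ℕ) (i : ℕ) : (w * adjSwap i) i = w (i + 1) := by
  simp

lemma mul_adjSwap_apply_right (w : Equiv.Perm ℕ) (i : ℕ) : (w * adjSwap i) (i + 1) = w i := by
  simp

section memSn

variable {m : ℕ} {u v : Equiv.Perm ℕ}

lemma apply_lt_of_memSn (hu : memSn m u) {p : ℕ} (hp : p < m) : u p < m := by
  by_contra! h
  have := u.injective (hu _ h)
  omega

lemma memSn_one (m : ℕ) : memSn m 1 := fun _ _ => rfl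

lemma memSn_mul (hu : memSn m u) (hv : memSn m v) : memSn m (u * v) := fun i hi => by
  rw [Equiv.Perm.mul_apply, hv i hi, hu i hi]

lemma memSn_inv (hu : memSn m u) : memSn m u⁻¹ := fun i hi => by
  rw [Equiv.Perm.inv_eq_iff_eq, hu i hi]

lemma memSn_mono {m' : ℕ} (h : m ≤ m') (hu : memSn m u) : memSn m' u :=
  fun i hi => hu i (h.trans hi)

lemma memSn_adjSwap {i : ℕ} (h : i + 1 < m) : memSn m (adjSwap i) := fun _ _ =>
  adjSwap_apply_of_ne (by omega) (by omega)

lemma memSn_w0 (m : ℕ) : memSn m (w0 m) := fun i hi => if_neg (by omega)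

lemma succ_lt_of_memSn_of_apply_succ_lt (hu : memSn m u) {i : ℕ} (h : u (i + 1) < u i) :
    i + 1 < m := by
  by_contra! hge
  rcases Nat.lt_or_ge i m with hi | hi
  · have := apply_lt_of_memSn hu hi
    rw [hu _ hge] at h
    omega
  · rw [hu _ hi, hu _ (by omega)] at h
    omega

end memSn

lemma w0_apply (m x : ℕ) : w0 m x = if x < m then m - 1 - x else x := rfl

lemma w0_inv (m : ℕ) : (w0 m)⁻¹ = w0 m :=
  inv_eq_of_mul_eq_one_right <| Equiv.ext fun x => by
    simp only [Equiv.Perm.mul_apply, w0_apply, Equiv.Perm.one_apply]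
    split_ifs <;> omega

lemma exists_apply_succ_lt_of_ne_one {w : Equiv.Perm ℕ} (hne : w ≠ 1) :
    ∃ i, w (i + 1) < w i := by
  by_contra! h
  have hmono : StrictMono w :=
    strictMono_nat_of_lt_succ fun i => (h i).lt_of_ne (w.injective.ne (by omega))
  exact hne (Equiv.ext fun x => le_antisymm
    (by simpa using (hmono.orderIsoOfSurjective w w.surjective).symm.strictMono.le_apply (x := w x))
    hmono.le_apply)

def inversions (m : ℕ) (w : Equiv.Perm ℕ) : Finset (ℕ × ℕ) :=
  (range m ×ˢ range m).filter fun p => p.1 < p.2 ∧ w p.2 < w p.1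

lemma mem_inversions {m : ℕ} {w : Equiv.Perm ℕ} {p : ℕ × ℕ} :
    p ∈ inversions m w ↔ (p.1 < m ∧ p.2 < m) ∧ p.1 < p.2 ∧ w p.2 < w p.1 := by
  simp [inversions]

lemma permLength_eq_card_inversions {m : ℕ} {w : Equiv.Perm ℕ} (hw : memSn m w) :
    permLength w = #(inversions m w) := by
  have hset : {p : ℕ × ℕ | p.1 < p.2 ∧ w p.2 < w p.1} = ↑(inversions m w) := by
    ext p
    simp only [Set.mem_ofPred_eq, mem_coe, mem_inversions]
    refine ⟨fun ⟨h₁, h₂⟩ => ?_, And.right⟩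
    have hp₂ : p.2 < m := by
      by_contra! hge
      rw [hw _ hge] at h₂
      by_cases hp₁ : p.1 < m
      · have := apply_lt_of_memSn hw hp₁
        omega
      · rw [hw _ (by omega)] at h₂
        omega
    exact ⟨⟨by omega, hp₂⟩, h₁, h₂⟩
  rw [permLength, ← Set.coe_ofPred, hset, Nat.card_coe_set_eq, Set.ncard_coe_finset]

lemma permLength_le {m : ℕ} {w : Equiv.Perm ℕ} (hw : memSn m w) : permLength w ≤ m * m := by
  rw [permLength_eq_card_inversions hw]
  exact (card_filter_le _ _).trans (by simp)

lemma permLength_one : permLength 1 = 0 := by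
  simp [permLength_eq_card_inversions (memSn_one 0), inversions]

lemma inversions_mul_adjSwap_erase {m i : ℕ} {w : Equiv.Perm ℕ} (him : i + 1 < m)
    (hasc : w i < w (i + 1)) :
    (inversions m (w * adjSwap i)).erase (i, i + 1) =
      (inversions m w).map (Equiv.prodCongr (adjSwap i) (adjSwap i)).toEmbedding := by
  ext ⟨p, q⟩
  simp only [mem_erase, mem_inversions, mem_map_equiv, Equiv.prodCongr_symm, adjSwap,
    Equiv.symm_swap, Equiv.prodCongr_apply, Prod.map, Equiv.Perm.mul_apply, ne_eq,
    Prod.mk.injEq, Equiv.swap_apply_def]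
  split_ifs <;> subst_vars <;> omega

lemma permLength_mul_adjSwap_of_lt {m i : ℕ} {w : Equiv.Perm ℕ} (hw : memSn m w)
    (him : i + 1 < m) (hasc : w i < w (i + 1)) :
    permLength (w * adjSwap i) = permLength w + 1 := by
  have hmem : (i, i + 1) ∈ inversions m (w * adjSwap i) := by
    simp [mem_inversions, him, hasc, Nat.lt_of_succ_lt him]
  rw [permLength_eq_card_inversions (memSn_mul hw (memSn_adjSwap him)),
    permLength_eq_card_inversions hw, ← card_erase_add_one hmem,
    inversions_mul_adjSwap_erase him hasc, card_map]

lemma permLength_mul_adjSwap_of_gt {m i : ℕ} {w : Equiv.Perm ℕ} (hw : memSn m w)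
    (him : i + 1 < m) (hdesc : w (i + 1) < w i) :
    permLength w = permLength (w * adjSwap i) + 1 := by
  have h := permLength_mul_adjSwap_of_lt (memSn_mul hw (memSn_adjSwap him)) him
    (by rwa [mul_adjSwap_apply_left, mul_adjSwap_apply_right])
  rwa [mul_assoc, adjSwap_mul_self, mul_one] at h

lemma permLength_adjSwap (i : ℕ) : permLength (adjSwap i) = 1 := by
  simpa [permLength_one] using
    permLength_mul_adjSwap_of_lt (memSn_one (i + 2)) (Nat.lt_succ_self _) (by simp)

lemma permLength_inv {m : ℕ} {w : Equiv.Perm ℕ} (hw : memSn m w) :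
    permLength w⁻¹ = permLength w := by
  rw [permLength_eq_card_inversions (memSn_inv hw), permLength_eq_card_inversions hw]
  refine card_bij' (fun p _ => (w⁻¹ p.2, w⁻¹ p.1)) (fun p _ => (w p.2, w p.1)) ?_ ?_ ?_ ?_
  · rintro ⟨p, q⟩ hpq
    rw [mem_inversions] at hpq ⊢
    exact ⟨⟨apply_lt_of_memSn (memSn_inv hw) hpq.1.2, apply_lt_of_memSn (memSn_inv hw) hpq.1.1⟩,
      hpq.2.2, by simpa using hpq.2.1⟩
  · rintro ⟨p, q⟩ hpq
    rw [mem_inversions] at hpq ⊢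
    exact ⟨⟨apply_lt_of_memSn hw hpq.1.2, apply_lt_of_memSn hw hpq.1.1⟩, hpq.2.2,
      by simpa using hpq.2.1⟩
  all_goals simp

/-- An inversion of `u * v` is either an inversion of `v` or, moved by `v`, one of `u`. -/
lemma permLength_mul_le {m : ℕ} {u v : Equiv.Perm ℕ} (hu : memSn m u) (hv : memSn m v) :
    permLength (u * v) ≤ permLength u + permLength v := by
  rw [permLength_eq_card_inversions (memSn_mul hu hv), permLength_eq_card_inversions hu,
    permLength_eq_card_inversions hv, ← card_filter_add_card_filter_not
      (fun p : ℕ × ℕ => v p.2 < v p.1), add_comm]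
  refine add_le_add ?_ ?_
  · refine card_le_card_of_injOn (Prod.map v v) ?_ ?_
    · rintro ⟨p, q⟩ hpq
      simp only [coe_filter, mem_inversions, Set.mem_ofPred_eq] at hpq
      simp only [mem_coe, mem_inversions, Prod.map]
      refine ⟨⟨apply_lt_of_memSn hv hpq.1.1.1, apply_lt_of_memSn hv hpq.1.1.2⟩,
        lt_of_le_of_ne (not_lt.mp hpq.2) (v.injective.ne (by omega)), hpq.1.2.2⟩
    · exact (Prod.map_injective.mpr ⟨v.injective, v.injective⟩).injOn
  · refine card_le_card fun p hp => ?_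
    simp only [mem_filter, mem_inversions] at hp ⊢
    exact ⟨hp.1.1, hp.1.2.1, hp.2⟩

lemma permLength_adjSwap_mul_of_lt {m i : ℕ} {v : Equiv.Perm ℕ} (hv : memSn m v)
    (him : i + 1 < m) (hasc : v⁻¹ i < v⁻¹ (i + 1)) :
    permLength (adjSwap i * v) = permLength v + 1 := by
  rw [← permLength_inv (memSn_mul (memSn_adjSwap him) hv), mul_inv_rev, adjSwap_inv,
    ← permLength_inv hv]
  exact permLength_mul_adjSwap_of_lt (memSn_inv hv) him hasc

lemma w0_lt_w0 {m a b : ℕ} (hab : a < b) (hb : b < m) : w0 m b < w0 m a := by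
  rw [w0_apply, w0_apply, if_pos hb, if_pos (hab.trans hb)]
  omega

variable (SD : SchubertData)

lemma Dw_mul {m : ℕ} {u v : Equiv.Perm ℕ} (hu : memSn m u) (hv : memSn m v)
    (hlen : permLength (u * v) = permLength u + permLength v) :
    SD.Dw (u * v) = SD.Dw u ∘ SD.Dw v := by
  by_cases hv1 : v = 1
  · subst hv1
    rw [mul_one, SD.Dw_one, Function.comp_id]
  obtain ⟨i, hi⟩ := exists_apply_succ_lt_of_ne_one hv1
  have him := succ_lt_of_memSn_of_apply_succ_lt hv hi
  obtain ⟨v', hv'⟩ : ∃ v', v' = v * adjSwap i := ⟨_, rfl⟩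
  have hvv : v' * adjSwap i = v := by rw [hv', mul_assoc, adjSwap_mul_self, mul_one]
  have hmem : memSn m v' := hv' ▸ memSn_mul hv (memSn_adjSwap him)
  have hlv : permLength v = permLength v' + 1 := hv' ▸ permLength_mul_adjSwap_of_gt hv him hi
  have h₁ := permLength_mul_le (memSn_mul hu hmem) (memSn_adjSwap him)
  have h₂ := permLength_mul_le hu hmem
  rw [mul_assoc, hvv, permLength_adjSwap] at h₁
  have hstep : permLength (u * v' * adjSwap i) = permLength (u * v') + 1 := by
    rw [mul_assoc, hvv]; omega
  calc SD.Dw (u * v) = SD.Dw (u * v' * adjSwap i) := by rw [mul_assoc, hvv]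
    _ = SD.Dw u ∘ SD.Dw v' ∘ SD.D i := by
      rw [SD.Dw_step _ _ hstep, Dw_mul hu hmem (by omega), Function.comp_assoc]
    _ = SD.Dw u ∘ SD.Dw v := by rw [← SD.Dw_step _ _ (by rw [hvv]; exact hlv), hvv]
termination_by permLength v
decreasing_by omega

lemma Dw_adjSwap (i : ℕ) : SD.Dw (adjSwap i) = SD.D i := by
  have h := SD.Dw_step 1 i (by rw [one_mul, permLength_adjSwap, permLength_one])
  rwa [one_mul, SD.Dw_one, Function.id_comp] at h

/-- `w⁻¹ w₀ = s_i · (w s_i)⁻¹ w₀` with the lengths adding up. -/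
lemma S_eq_D_S_mul_adjSwap {m i : ℕ} {w : Equiv.Perm ℕ} (hw : memSn m w) (him : i + 1 < m)
    (hasc : w i < w (i + 1)) : SD.S w = SD.D i (SD.S (w * adjSwap i)) := by
  obtain ⟨v, hvdef⟩ : ∃ v, v = (w * adjSwap i)⁻¹ * w0 m := ⟨_, rfl⟩
  have hv : memSn m v := hvdef ▸
    memSn_mul (memSn_inv (memSn_mul hw (memSn_adjSwap him))) (memSn_w0 m)
  have hsv : adjSwap i * v = w⁻¹ * w0 m := by
    rw [hvdef, mul_inv_rev, adjSwap_inv, ← mul_assoc, ← mul_assoc, adjSwap_mul_self, one_mul]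
  have hvinv : ∀ x, v⁻¹ x = w0 m ((w * adjSwap i) x) := fun x => by
    simp [hvdef, mul_inv_rev, w0_inv]
  have hlen : permLength (adjSwap i * v) = permLength (adjSwap i) + permLength v := by
    rw [permLength_adjSwap, add_comm]
    refine permLength_adjSwap_mul_of_lt hv him ?_
    rw [hvinv, hvinv, mul_adjSwap_apply_left, mul_adjSwap_apply_right]
    exact w0_lt_w0 hasc (apply_lt_of_memSn hw him)
  rw [SD.hS m w hw, SD.hS m _ (memSn_mul hw (memSn_adjSwap him)), ← hvdef, ← hsv,
    Dw_mul SD (memSn_adjSwap him) hv hlen, Dw_adjSwap]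
  rfl

lemma X_sub_X_succ_ne_zero (i : ℕ) : (X i - X (i + 1) : MvPolynomial ℕ ℤ) ≠ 0 :=
  sub_ne_zero.mpr (X_injective.ne (by omega))

lemma esymmN_mem_In {n k : ℕ} (h₁ : 1 ≤ k) (h₂ : k ≤ n) : esymmN n k ∈ In n :=
  Ideal.subset_span ⟨k, h₁, h₂, rfl⟩

lemma map_adjSwap_range {n i : ℕ} (h : i + 1 < n) :
    (range n).map (adjSwap i).toEmbedding = range n := by
  ext x
  rw [mem_map_equiv, mem_range, mem_range, Equiv.symm_swap, Equiv.swap_apply_def]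
  split_ifs <;> omega

lemma rename_adjSwap_esymmN {n i : ℕ} (h : i + 1 < n) (k : ℕ) :
    rename (adjSwap i) (esymmN n k) = esymmN n k := by
  conv_rhs => rw [esymmN, ← map_adjSwap_range h, powersetCard_map, sum_map]
  simp only [esymmN, map_sum, map_prod, rename_X]
  refine sum_congr rfl fun t _ => ?_
  simp [mapEmbedding_apply, prod_map]

lemma X_zero_pow_mem_In {n : ℕ} (hn : 0 < n) : (X 0 : MvPolynomial ℕ ℤ) ^ n ∈ In n := by
  have hvieta := congrArg (Polynomial.eval (X 0))
    (Multiset.prod_X_sub_X_eq_sum_esymm ((range n).val.map (X : ℕ → MvPolynomial ℕ ℤ)))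
  simp only [Multiset.map_map, Function.comp_def, Polynomial.eval_multiset_prod,
    Polynomial.eval_sub, Polynomial.eval_X, Polynomial.eval_C, Polynomial.eval_finsetSum,
    Polynomial.eval_mul, Polynomial.eval_pow, Polynomial.eval_neg, Polynomial.eval_one,
    Multiset.card_map, card_val, card_range, Finset.esymm_map_val] at hvieta
  rw [← prod_eq_multiset_prod, prod_eq_zero (mem_range.mpr hn) (sub_self _),
    sum_range_succ'] at hvieta
  simp only [pow_zero, one_mul, powersetCard_zero, sum_singleton,
    prod_empty, Nat.sub_zero] at hvieta
  rw [eq_neg_of_add_eq_zero_right hvieta.symm]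
  refine neg_mem (sum_mem fun j hj => ?_)
  exact Ideal.mul_mem_left _ _ (Ideal.mul_mem_right _ _
    (esymmN_mem_In (by omega) (by simpa using hj)))

lemma D_eq_iff {i : ℕ} {f g : MvPolynomial ℕ ℤ} :
    SD.D i f = g ↔ f - rename (adjSwap i) f = (X i - X (i + 1)) * g := by
  rw [← SD.hD, mul_right_inj' (X_sub_X_succ_ne_zero i)]

lemma D_add (i : ℕ) (f g : MvPolynomial ℕ ℤ) : SD.D i (f + g) = SD.D i f + SD.D i g := by
  rw [D_eq_iff, map_add, mul_add, SD.hD, SD.hD]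
  ring

lemma D_eq_zero_of_rename {i : ℕ} {f : MvPolynomial ℕ ℤ} (h : rename (adjSwap i) f = f) :
    SD.D i f = 0 := by
  rw [D_eq_iff, h, sub_self, mul_zero]

lemma D_mul (i : ℕ) (f g : MvPolynomial ℕ ℤ) :
    SD.D i (f * g) = SD.D i f * g + rename (adjSwap i) f * SD.D i g := by
  rw [D_eq_iff, map_mul]
  linear_combination (-g) * SD.hD i f - rename (adjSwap i) f * SD.hD i g

lemma D_mem_In {n i : ℕ} (hin : i + 1 < n) {f : MvPolynomial ℕ ℤ} (hf : f ∈ In n) :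
    SD.D i f ∈ In n := by
  refine Submodule.span_induction (p := fun f _ => SD.D i f ∈ In n) ?_ ?_ ?_ ?_ hf
  · rintro _ ⟨k, -, -, rfl⟩
    rw [D_eq_zero_of_rename SD (rename_adjSwap_esymmN hin k)]
    exact zero_mem _
  · rw [D_eq_zero_of_rename SD (map_zero _)]
    exact zero_mem _
  · intro f g _ _ hf hg
    rw [D_add]
    exact add_mem hf hg
  · intro a f hf hDf
    rw [smul_eq_mul, D_mul]
    exact add_mem (Ideal.mul_mem_left _ _ hf) (Ideal.mul_mem_left _ _ hDf)

/-- The Lehmer code of `w`, provided `w ∈ S_m`. -/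
def lehmerCode (m : ℕ) (w : Equiv.Perm ℕ) (j : ℕ) : ℕ :=
  #{k ∈ Ioo j m | w k < w j}

section LehmerCode

variable {m : ℕ} {w : Equiv.Perm ℕ}

lemma lehmerCode_eq_add {i : ℕ} (him : i + 1 < m) :
    lehmerCode m w i = #{k ∈ Ioo (i + 1) m | w k < w i} + if w (i + 1) < w i then 1 else 0 := by
  have hIoo : Ioo i m = insert (i + 1) (Ioo (i + 1) m) := by
    ext k
    simp only [mem_Ioo, mem_insert]
    omega
  rw [lehmerCode, hIoo, filter_insert]
  split_ifs
  · exact card_insert_of_notMem (by simp)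
  · rfl

lemma lehmerCode_succ_lt {i : ℕ} (him : i + 1 < m) (hdesc : w (i + 1) < w i) :
    lehmerCode m w (i + 1) < lehmerCode m w i := by
  rw [lehmerCode_eq_add him, if_pos hdesc, Nat.lt_succ_iff]
  exact card_le_card (monotone_filter_right _ fun k _ (hk : w k < w (i + 1)) => hk.trans hdesc)

lemma lehmerCode_le_of_lt {i : ℕ} (him : i + 1 < m) (hasc : w i < w (i + 1)) :
    lehmerCode m w i ≤ lehmerCode m w (i + 1) := by
  rw [lehmerCode_eq_add him, if_neg hasc.asymm, add_zero]
  exact card_le_card (monotone_filter_right _ fun k _ (hk : w k < w i) => hk.trans hasc)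

lemma lehmerCode_mul_adjSwap_self {i : ℕ} (him : i + 1 < m) (hasc : w i < w (i + 1)) :
    lehmerCode m (w * adjSwap i) i = lehmerCode m w (i + 1) + 1 := by
  rw [lehmerCode_eq_add him, mul_adjSwap_apply_left, mul_adjSwap_apply_right, if_pos hasc]
  congr 2
  refine filter_congr fun k hk => ?_
  rw [mem_Ioo] at hk
  rw [Equiv.Perm.mul_apply, adjSwap_apply_of_ne (by omega) (by omega)]

lemma lehmerCode_mul_adjSwap_succ {i : ℕ} (him : i + 1 < m) (hasc : w i < w (i + 1)) :
    lehmerCode m (w * adjSwap i) (i + 1) = lehmerCode m w i := by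
  rw [lehmerCode_eq_add him, if_neg hasc.asymm, add_zero, lehmerCode, mul_adjSwap_apply_right]
  refine congrArg card (filter_congr fun k hk => ?_)
  rw [mem_Ioo] at hk
  rw [Equiv.Perm.mul_apply, adjSwap_apply_of_ne (by omega) (by omega)]

/-- For `j ∉ {i, i+1}`, `s_i` permutes `Ioo j m` and fixes `j`. -/
lemma lehmerCode_mul_adjSwap_of_ne {i j : ℕ} (him : i + 1 < m) (hj₁ : j ≠ i) (hj₂ : j ≠ i + 1) :
    lehmerCode m (w * adjSwap i) j = lehmerCode m w j := by
  have hmaps : ∀ k ∈ Ioo j m, adjSwap i k ∈ Ioo j m := fun k hk => by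
    rw [mem_Ioo] at hk ⊢
    rw [adjSwap_apply]
    split_ifs <;> omega
  refine card_nbij' (adjSwap i) (adjSwap i) ?_ ?_ (fun k _ => by simp) (fun k _ => by simp)
  all_goals
    intro k hk
    simp only [coe_filter, Set.mem_ofPred_eq, Equiv.Perm.mul_apply,
      adjSwap_apply_of_ne hj₁ hj₂] at hk ⊢
    simpa using And.intro (hmaps k hk.1) hk.2

lemma lehmerCode_w0 {j : ℕ} (hj : j < m) : lehmerCode m (w0 m) j = m - 1 - j := by
  rw [lehmerCode, filter_true_of_mem fun k hk => w0_lt_w0 (mem_Ioo.mp hk).1 (mem_Ioo.mp hk).2,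
    Nat.card_Ioo]
  omega

lemma eq_w0_of_apply_succ_lt (hw : memSn m w) (hdesc : ∀ i, i + 1 < m → w (i + 1) < w i) :
    w = w0 m := by
  have h : w0 m * w = 1 := by
    by_contra hne
    obtain ⟨i, hi⟩ := exists_apply_succ_lt_of_ne_one hne
    have him := succ_lt_of_memSn_of_apply_succ_lt (memSn_mul (memSn_w0 m) hw) hi
    exact hi.asymm (w0_lt_w0 (hdesc i him) (apply_lt_of_memSn hw (by omega)))
  rw [eq_inv_of_mul_eq_one_right h, w0_inv]

end LehmerCode

/-- `∂_i (X_i^{b+1} X_{i+1}^b M) = X_i^b X_{i+1}^b M` for `s_i`-invariant `M`. -/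
lemma D_prod_X_pow {m i : ℕ} (him : i + 1 < m) {e e' : ℕ → ℕ} (h₁ : e' i = e i + 1)
    (h₂ : e' (i + 1) = e i) (h₃ : e (i + 1) = e i)
    (hrest : ∀ j, j ≠ i → j ≠ i + 1 → e' j = e j) :
    SD.D i (∏ j ∈ range m, X j ^ e' j) = ∏ j ∈ range m, X j ^ e j := by
  set rest := ((range m).erase i).erase (i + 1)
  have hsplit : ∀ f : ℕ → MvPolynomial ℕ ℤ,
      ∏ j ∈ range m, f j = f i * f (i + 1) * ∏ j ∈ rest, f j :=
    fun f => by
      rw [mul_assoc, mul_prod_erase _ _ (mem_erase.mpr ⟨by omega, mem_range.mpr him⟩),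
        mul_prod_erase _ _ (mem_range.mpr (by omega))]
  have hrest' : ∀ j ∈ rest, j ≠ i ∧ j ≠ i + 1 := fun j hj =>
    ⟨(mem_erase.mp (mem_erase.mp hj).2).1, (mem_erase.mp hj).1⟩
  have hM : rename (adjSwap i) (∏ j ∈ rest, (X j : MvPolynomial ℕ ℤ) ^ e j) =
      ∏ j ∈ rest, X j ^ e j := by
    simp only [map_prod, map_pow, rename_X]
    exact prod_congr rfl fun j hj => by rw [adjSwap_apply_of_ne (hrest' j hj).1 (hrest' j hj).2]
  rw [hsplit, hsplit, prod_congr rfl fun j hj => by rw [hrest j (hrest' j hj).1 (hrest' j hj).2],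
    h₁, h₂, h₃, D_eq_iff, map_mul, map_mul, hM]
  simp only [map_pow, rename_X, Equiv.swap_apply_left, Equiv.swap_apply_right]
  ring

lemma lehmerCode_mul_adjSwap_antitone {m i : ℕ} {w : Equiv.Perm ℕ} (him : i + 1 < m)
    (hasc : w i < w (i + 1))
    (hdom : ∀ j, j + 1 < m → lehmerCode m w (j + 1) ≤ lehmerCode m w j)
    (heq : lehmerCode m w (i + 1) = lehmerCode m w i)
    (hprev : ∀ j, j + 1 = i → lehmerCode m w i < lehmerCode m w j) :
    ∀ j, j + 1 < m → lehmerCode m (w * adjSwap i) (j + 1) ≤ lehmerCode m (w * adjSwap i) j := by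
  have hself := lehmerCode_mul_adjSwap_self him hasc
  have hsucc := lehmerCode_mul_adjSwap_succ him hasc
  intro j hj
  rcases lt_trichotomy (j + 1) i with hji | rfl | hij
  · rw [lehmerCode_mul_adjSwap_of_ne him (by omega) (by omega),
      lehmerCode_mul_adjSwap_of_ne him (by omega) (by omega)]
    exact hdom j hj
  · rw [hself, lehmerCode_mul_adjSwap_of_ne him (by omega) (by omega)]
    have := hprev j rfl
    omega
  · obtain rfl | rfl | hij := show j = i ∨ j = i + 1 ∨ i + 1 < j by omega
    · omega
    · rw [hsucc, lehmerCode_mul_adjSwap_of_ne him (by omega) (by omega)]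
      have := hdom (i + 1) hj
      omega
    · rw [lehmerCode_mul_adjSwap_of_ne him (by omega) (by omega),
        lehmerCode_mul_adjSwap_of_ne him (by omega) (by omega)]
      exact hdom j hj

/-- Induction down from `w₀`: at the first repeated value `c_i = c_{i+1}` of the code `w` has an
ascent, and the code of `w s_i` is again weakly decreasing. -/
theorem S_eq_prod_lehmerCode {m : ℕ} {w : Equiv.Perm ℕ} (hw : memSn m w)
    (hdom : ∀ j, j + 1 < m → lehmerCode m w (j + 1) ≤ lehmerCode m w j) :
    SD.S w = ∏ j ∈ range m, X j ^ lehmerCode m w j := by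
  by_cases hstrict : ∀ j, j + 1 < m → lehmerCode m w (j + 1) < lehmerCode m w j
  · obtain rfl := eq_w0_of_apply_succ_lt hw fun i him => by
      by_contra! h
      exact (hstrict i him).not_ge
        (lehmerCode_le_of_lt him (h.lt_of_ne (w.injective.ne (by omega))))
    rw [SD.hS m _ hw, inv_mul_cancel, SD.Dw_one, id, staircase]
    exact prod_congr rfl fun j hj => by rw [lehmerCode_w0 (mem_range.mp hj)]
  push Not at hstrict
  obtain ⟨i, ⟨him, hge⟩, hmin⟩ : ∃ i, (i + 1 < m ∧ lehmerCode m w i ≤ lehmerCode m w (i + 1)) ∧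
      ∀ j < i, ¬ (j + 1 < m ∧ lehmerCode m w j ≤ lehmerCode m w (j + 1)) :=
    ⟨Nat.find hstrict, Nat.find_spec hstrict, fun _ => Nat.find_min hstrict⟩
  have hasc : w i < w (i + 1) := by
    by_contra! h
    exact hge.not_gt (lehmerCode_succ_lt him (h.lt_of_ne (w.injective.ne (by omega))))
  have heq := le_antisymm (hdom i him) hge
  have hprev : ∀ j, j + 1 = i → lehmerCode m w i < lehmerCode m w j := by
    rintro j rfl
    have := hmin j (by omega)
    omega
  have hlen := permLength_mul_adjSwap_of_lt hw him hasc
  have hbound := permLength_le (memSn_mul hw (memSn_adjSwap him))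
  rw [S_eq_D_S_mul_adjSwap SD hw him hasc,
    S_eq_prod_lehmerCode (memSn_mul hw (memSn_adjSwap him))
      (lehmerCode_mul_adjSwap_antitone him hasc hdom heq hprev)]
  exact D_prod_X_pow SD him (by rw [lehmerCode_mul_adjSwap_self him hasc, heq])
    (lehmerCode_mul_adjSwap_succ him hasc) heq fun j hj₁ hj₂ =>
      lehmerCode_mul_adjSwap_of_ne him hj₁ hj₂
termination_by m * m - permLength w
decreasing_by omega

section Tail

variable {n : ℕ} {w : Equiv.Perm ℕ}

lemma add_le_apply_add (hinc : ∀ i, n ≤ i → w i < w (i + 1)) {j : ℕ} (hj : n ≤ j) (d : ℕ) :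
    w j + d ≤ w (j + d) := by
  induction d with
  | zero => rfl
  | succ d ih =>
    have := hinc (j + d) (by omega)
    rw [← add_assoc, ← add_assoc]
    omega

/-- Squeezed between `w n ≥ n` and `w m = m`, the increasing tail is the identity. -/
lemma memSn_of_forall_apply_lt (hinc : ∀ i, n ≤ i → w i < w (i + 1)) {m : ℕ} (hw : memSn m w)
    (hvals : ∀ p < n, w p < n) : memSn n w := by
  intro j hj
  have hn : n ≤ w n := by
    by_contra! h
    have himg : (range n).image w = range n :=
      eq_of_subset_of_card_le (fun x hx => by
        obtain ⟨p, hp, rfl⟩ := mem_image.mp hx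
        exact mem_range.mpr (hvals p (mem_range.mp hp)))
        (by rw [card_image_of_injective _ w.injective])
    obtain ⟨p, hp, hpn⟩ := mem_image.mp (himg ▸ mem_range.mpr h)
    have := w.injective hpn
    rw [mem_range] at hp
    omega
  have hge := add_le_apply_add hinc le_rfl (j - n)
  rw [Nat.add_sub_cancel' hj] at hge
  rcases le_or_gt m j with hmj | hjm
  · exact hw j hmj
  · have hle := add_le_apply_add hinc hj (m - j)
    rw [Nat.add_sub_cancel' hjm.le, hw m le_rfl] at hle
    omega

lemma lehmerCode_eq_zero (hinc : ∀ i, n ≤ i → w i < w (i + 1)) {m j : ℕ} (hj : n ≤ j) :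
    lehmerCode m w j = 0 := by
  refine card_eq_zero.mpr (filter_eq_empty_iff.mpr fun k hk => ?_)
  have := add_le_apply_add hinc hj (k - j)
  rw [Nat.add_sub_cancel' (mem_Ioo.mp hk).1.le] at this
  have := (mem_Ioo.mp hk).1
  omega

end Tail

/-- The values below `w q` are all taken to the right of `q`. -/
lemma lehmerCode_eq_apply {m q : ℕ} {w : Equiv.Perm ℕ} (hw : memSn m w) (hq : q < m)
    (hdec : ∀ p, p < q → w q < w p) : lehmerCode m w q = w q := by
  refine (card_nbij' w (⇑w⁻¹) (fun k hk => ?_) (fun v hv => ?_) (fun k _ => by simp)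
    (fun v _ => by simp)).trans (card_range (w q))
  · simpa using (mem_filter.mp hk).2
  · have hv : v < w q := by simpa using hv
    have hwv : w (w⁻¹ v) = v := by simp
    have hlt : w⁻¹ v < m := apply_lt_of_memSn (memSn_inv hw) (hv.trans (apply_lt_of_memSn hw hq))
    have hgt : q < w⁻¹ v := by
      by_contra! hle
      rcases hle.lt_or_eq with hlt' | heq
      · have := hdec _ hlt'
        omega
      · rw [← heq, hwv] at hv
        omega
    simpa [hwv] using ⟨⟨hgt, hlt⟩, hv⟩

lemma S_mem_In_of_apply_succ_lt {n m : ℕ} {w : Equiv.Perm ℕ} (hn : 0 < n) (hnm : n ≤ m)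
    (hw : memSn m w) (hinc : ∀ i, n ≤ i → w i < w (i + 1))
    (hdesc : ∀ i, i + 1 < n → w (i + 1) < w i) (hnot : ¬ memSn n w) : SD.S w ∈ In n := by
  have hdec : StrictAntiOn w (Set.Iic (n - 1)) :=
    strictAntiOn_Iic_of_succ_lt fun i hi => hdesc i (by omega)
  have hcode : ∀ j, lehmerCode m w j = if j < n then w j else 0 := fun j => by
    split_ifs with hj
    · exact lehmerCode_eq_apply hw (by omega) fun p hp =>
        hdec (show p ≤ n - 1 by omega) (show j ≤ n - 1 by omega) hp
    · exact lehmerCode_eq_zero hinc (by omega)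
  have hdom : ∀ j, j + 1 < m → lehmerCode m w (j + 1) ≤ lehmerCode m w j := fun j hj => by
    rw [hcode, hcode]
    split_ifs <;> first | omega | exact (hdesc j (by omega)).le
  have h0 : n ≤ w 0 := by
    by_contra! h
    exact hnot (memSn_of_forall_apply_lt hinc hw fun p hp =>
      lt_of_le_of_lt (hdec.antitoneOn (show 0 ≤ n - 1 by omega) (show p ≤ n - 1 by omega)
        (Nat.zero_le p)) h)
  rw [S_eq_prod_lehmerCode SD hw hdom, ← mul_prod_erase _ _ (mem_range.mpr (by omega : 0 < m)),
    hcode, if_pos hn, ← Nat.add_sub_cancel' h0, pow_add, mul_assoc]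
  exact Ideal.mul_mem_right _ _ (X_zero_pow_mem_In hn)

theorem S_mem_In_of_memSn {n m : ℕ} {w : Equiv.Perm ℕ} (hn : 0 < n) (hnm : n ≤ m)
    (hw : memSn m w) (hinc : ∀ i, n ≤ i → w i < w (i + 1)) (hnot : ¬ memSn n w) :
    SD.S w ∈ In n := by
  by_cases hasc : ∃ i, i + 1 < n ∧ w i < w (i + 1)
  · obtain ⟨i, hin, hasc⟩ := hasc
    have him : i + 1 < m := by omega
    have hfix : ∀ j, n ≤ j → (w * adjSwap i) j = w j := fun j hj => by
      rw [Equiv.Perm.mul_apply, adjSwap_apply_of_ne (by omega) (by omega)]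
    have hlen := permLength_mul_adjSwap_of_lt hw him hasc
    have hbound := permLength_le (memSn_mul hw (memSn_adjSwap him))
    rw [S_eq_D_S_mul_adjSwap SD hw him hasc]
    refine D_mem_In SD hin (S_mem_In_of_memSn hn hnm (memSn_mul hw (memSn_adjSwap him))
      (fun j hj => ?_) fun h => hnot fun j hj => ?_)
    · rw [hfix j hj, hfix (j + 1) (by omega)]
      exact hinc j hj
    · rw [← hfix j hj]
      exact h j hj
  · push Not at hasc
    exact S_mem_In_of_apply_succ_lt SD hn hnm hw hinc
      (fun i hi => (hasc i hi).lt_of_ne (w.injective.ne (by omega))) hnot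
termination_by m * m - permLength w
decreasing_by omega

end Schubert

open Schubert

/-- if `w ∈ S^{(n)} \ S_n`, i.e. `w(n+1) < w(n+2) < ⋯` but `w ∉ S_n`,
then the Schubert polynomial `𝔖_w` lies in the ideal `I_n = ⟨e_1, …, e_n⟩`. -/
theorem schubert_mem_In (SD : SchubertData) (n : ℕ) (w : Equiv.Perm ℕ)
    (hfin : finSupp w)
    (hinc : ∀ i, n ≤ i → w i < w (i + 1))
    (hnot : ¬ memSn n w) :
    SD.S w ∈ In n := by
  obtain ⟨m, hm⟩ := hfin
  rcases Nat.eq_zero_or_pos n with rfl | hn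
  · exact absurd (memSn_of_forall_apply_lt hinc hm fun p hp => absurd hp (Nat.not_lt_zero p)) hnot
  · exact S_mem_In_of_memSn SD hn (le_max_left n m) (memSn_mono (le_max_right n m) hm) hinc hnot
end
end

section
/- Given any permutation $w$ with $w \in S^{(n)} \setminus S_n$, let $w'$ be the permutation obtained by rearranging $(w(1),\ldots,w(n))$ in decreasing order and setting $w'(i) = w(i)$ for $i > n$. Then $w'(1) > n$, there exists $v \in S_n$ with $wv = w'$ and $l(v) = l(w') - l(w)$. -/
/-!
Let `v ∈ S_n` sort `w 0, …, w (n-1)` decreasingly and put `w' = w v`. Every inversion of `v`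
lies in `{0, …, n-1}`, where `w'` inverts every pair, so it is also an inversion of `w'`; the
remaining inversions `(i, j)` of `w'` are exactly the pairs for which `(v i, v j)` is an inversion
of `w`. Hence `l(w') = l(v) + l(w)`.

If `w` mapped `{0, …, n-1}` into itself, it would permute `[n, ∞)` increasingly, i.e. fix it,
contradicting `w ∉ S_n`; so some `w m ≥ n` with `m < n`, and `w' 0 = max_{m < n} w m ≥ n`.
-/

open MvPolynomial Finset

noncomputable section

section Inversions

variable {α : Type*} [LinearOrder α]

def inversions (u : Equiv.Perm α) : Set (α × α) :=
  {p | p.1 < p.2 ∧ u p.2 < u p.1}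

theorem inversions_mul_diff_eq_preimage {w v : Equiv.Perm α}
    (h : inversions v ⊆ inversions (w * v)) :
    inversions (w * v) \ inversions v = Prod.map v v ⁻¹' inversions w := by
  ext ⟨i, j⟩
  simp only [inversions, Set.mem_sdiff, Set.mem_ofPred_eq, Set.mem_preimage, Prod.map,
    Equiv.Perm.mul_apply, not_and, not_lt]
  constructor
  · rintro ⟨⟨hij, hw⟩, hv⟩
    exact ⟨(hv hij).lt_of_ne (v.injective.ne hij.ne), hw⟩
  · rintro ⟨hv, hw⟩
    have hij : i < j := by
      rcases lt_trichotomy i j with hij | rfl | hji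
      · exact hij
      · exact absurd hv (lt_irrefl _)
      · exact absurd (h (show (j, i) ∈ inversions v from ⟨hji, hv⟩)).2 hw.asymm
    exact ⟨⟨hij, hw⟩, fun _ => hv.le⟩

theorem encard_inversions_mul {w v : Equiv.Perm α} (h : inversions v ⊆ inversions (w * v)) :
    (inversions (w * v)).encard = (inversions w).encard + (inversions v).encard := by
  rw [← Set.encard_sdiff_add_encard_of_subset h, inversions_mul_diff_eq_preimage h,
    Set.encard_preimage_of_bijective (v.bijective.prodMap v.bijective)]

end Inversions

theorem permLength_eq_ncard (u : Equiv.Perm ℕ) : permLength u = (inversions u).ncard :=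
  Nat.card_coe_set_eq _

theorem permLength_mul {w v : Equiv.Perm ℕ} (hw : (inversions w).Finite)
    (hv : (inversions v).Finite) (h : inversions v ⊆ inversions (w * v)) :
    permLength (w * v) = permLength w + permLength v := by
  have hwv := encard_inversions_mul h
  have hfin : (inversions (w * v)).Finite := by
    rw [← Set.encard_lt_top_iff, hwv]
    exact ENat.add_lt_top.2 ⟨hw.encard_lt_top, hv.encard_lt_top⟩
  simp only [permLength_eq_ncard, ← Nat.cast_inj (R := ℕ∞), Nat.cast_add, hw.cast_ncard_eq,
    hv.cast_ncard_eq, hfin.cast_ncard_eq, hwv]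

theorem memSn.apply_lt {n : ℕ} {u : Equiv.Perm ℕ} (hu : memSn n u) {i : ℕ} (hi : i < n) :
    u i < n := by
  by_contra! h
  have := u.injective (hu (u i) h)
  omega

theorem memSn.inv {n : ℕ} {u : Equiv.Perm ℕ} (hu : memSn n u) : memSn n u⁻¹ :=
  fun i hi => by rw [Equiv.Perm.inv_eq_iff_eq, hu i hi]

theorem memSn.inversions_subset {n : ℕ} {u : Equiv.Perm ℕ} (hu : memSn n u) :
    inversions u ⊆ Set.Iio n ×ˢ Set.Iio n := by
  rintro ⟨i, j⟩ ⟨hij, hu'⟩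
  dsimp only at hij hu'
  have hj : j < n := by
    by_contra! hj
    rw [hu j hj] at hu'
    by_cases hi : i < n
    · have := hu.apply_lt hi; omega
    · rw [hu i (by omega)] at hu'; omega
  exact ⟨lt_trans hij hj, hj⟩

theorem finSupp.finite_inversions {u : Equiv.Perm ℕ} (hu : finSupp u) :
    (inversions u).Finite :=
  let ⟨_, hn⟩ := hu
  ((Set.finite_Iio _).prod (Set.finite_Iio _)).subset hn.inversions_subset

theorem le_apply_of_strictMonoOn_Ici {n : ℕ} {f : ℕ → ℕ} (hf : StrictMonoOn f (Set.Ici n))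
    (hmaps : Set.MapsTo f (Set.Ici n) (Set.Ici n)) {i : ℕ} (hi : n ≤ i) : i ≤ f i := by
  induction i, hi using Nat.le_induction with
  | base => exact hmaps (Set.mem_Ici.2 le_rfl)
  | succ k hk ih =>
    have := hf (Set.mem_Ici.2 hk) (Set.mem_Ici.2 (by omega : n ≤ k + 1)) (Nat.lt_add_one k)
    omega

theorem memSn_of_strictMonoOn_Ici {n : ℕ} {w : Equiv.Perm ℕ}
    (hmono : StrictMonoOn w (Set.Ici n)) (hlt : ∀ m < n, w m < n) : memSn n w := by
  have hbij : Set.BijOn w (Set.Iio n) (Set.Iio n) :=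
    ((Set.finite_Iio n).injOn_iff_bijOn_of_mapsTo hlt).1 w.injective.injOn
  have hw : Set.MapsTo w (Set.Ici n) (Set.Ici n) := by
    intro i hi
    by_contra h
    rw [Set.mem_Ici, not_le] at h
    obtain ⟨m, hm, hmi⟩ := hbij.surjOn h
    obtain rfl := w.injective hmi
    exact (Set.mem_Iio.1 hm).not_ge hi
  have hwinv : Set.MapsTo w.symm (Set.Ici n) (Set.Ici n) := by
    intro j hj
    by_contra h
    rw [Set.mem_Ici, not_le] at h
    have := hlt _ h
    rw [w.apply_symm_apply] at this
    exact absurd this (not_lt.2 hj)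
  have hinvmono : StrictMonoOn w.symm (Set.Ici n) := fun a ha b hb hab => by
    rwa [← hmono.lt_iff_lt (hwinv ha) (hwinv hb), w.apply_symm_apply, w.apply_symm_apply]
  intro i hi
  have h1 := le_apply_of_strictMonoOn_Ici hmono hw hi
  have h2 := le_apply_of_strictMonoOn_Ici hinvmono hwinv (hw hi)
  rw [w.symm_apply_apply] at h2
  omega

theorem memSn_embedPerm (n : ℕ) (u : Equiv.Perm (Fin n)) : memSn n (embedPerm n u) :=
  fun _ hi => u.extendDomain_apply_not_subtype Fin.equivSubtype (not_lt.2 hi)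

theorem embedPerm_apply_of_lt {n : ℕ} (u : Equiv.Perm (Fin n)) {i : ℕ} (hi : i < n) :
    embedPerm n u i = u ⟨i, hi⟩ := by
  rw [embedPerm, u.extendDomain_apply_subtype Fin.equivSubtype hi]
  rfl

theorem exists_memSn_strictAntiOn_mul (n : ℕ) (w : Equiv.Perm ℕ) :
    ∃ v, memSn n v ∧ StrictAntiOn (w * v) (Set.Iio n) := by
  let f : Fin n → ℕᵒᵈ := fun i => OrderDual.toDual (w i)
  have hsort : StrictMono (f ∘ Tuple.sort f) :=
    (Tuple.monotone_sort f).strictMono_of_injective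
      (w.injective.comp (Fin.val_injective.comp (Tuple.sort f).injective))
  refine ⟨embedPerm n (Tuple.sort f), memSn_embedPerm n _, fun i hi j hj hij => ?_⟩
  simp only [Equiv.Perm.mul_apply, embedPerm_apply_of_lt _ hi, embedPerm_apply_of_lt _ hj]
  exact hsort (show (⟨i, hi⟩ : Fin n) < ⟨j, hj⟩ from hij)

/-- Everything is 0-indexed: `w'(1) > n` reads `n ≤ w' 0`. -/
theorem decreasing_rearrangement (n : ℕ) (w : Equiv.Perm ℕ) (hfin : finSupp w)
    (hinc : ∀ i, n ≤ i → w i < w (i + 1))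
    (hnot : ¬ memSn n w) :
    ∃ w' : Equiv.Perm ℕ,
      (∀ i, n ≤ i → w' i = w i) ∧
      (∀ i j, i < j → j < n → w' j < w' i) ∧
      n ≤ w' 0 ∧
      ∃ v : Equiv.Perm ℕ, memSn n v ∧ w * v = w' ∧
        permLength w + permLength v = permLength w' := by
  have hmono : StrictMonoOn w (Set.Ici n) :=
    strictMonoOn_of_lt_add_one Set.ordConnected_Ici fun a _ ha _ => hinc a ha
  obtain ⟨m, hm, hwm⟩ : ∃ m < n, n ≤ w m := by
    by_contra! h
    exact hnot (memSn_of_strictMonoOn_Ici hmono h)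
  obtain ⟨v, hv, hanti⟩ := exists_memSn_strictAntiOn_mul n w
  have hvm : v⁻¹ m < n := hv.inv.apply_lt hm
  refine ⟨w * v, fun i hi => by simp [hv i hi], fun i j hij hj => hanti (hij.trans hj) hj hij,
    ?_, v, hv, rfl, ?_⟩
  · calc n ≤ w m := hwm
      _ = (w * v) (v⁻¹ m) := by simp
      _ ≤ (w * v) 0 := hanti.antitoneOn ((Nat.zero_le _).trans_lt hvm) hvm (Nat.zero_le _)
  · refine (permLength_mul hfin.finite_inversions (finSupp.finite_inversions ⟨n, hv⟩) ?_).symm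
    intro p hp
    obtain ⟨h1, h2⟩ := hv.inversions_subset hp
    exact ⟨hp.1, hanti h1 h2 hp.1⟩
end
end

section
/- The quotient ring $H_n = \mathbb{Z}[X_1,\ldots,X_n]/\langle e_1,\ldots,e_n\rangle$ is a free $\mathbb{Z}$-module with basis the classes of monomials $X_1^{k_1} X_2^{k_2}\cdots X_n^{k_n}$ with $0 \le k_i \le n-i$ for all $i$. -/
/-!
Over a domain `R`, the products `e^b X^k = ∏ e_(i+1)^(b i) * ∏ X_i^(k i)`, with `b` arbitrary and
`k` a staircase exponent, form an `R`-basis of `R[X_0, …, X_(n-1)]` (Artin's basis: the staircase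
monomials are a basis over the symmetric polynomials). The ideal `⟨e_1, …, e_n⟩` is then spanned by
the basis vectors with `b ≠ 0`, so the classes of the staircase monomials form a basis of the
quotient.

The basis is built by induction on `n`, adding a new variable `X_0` in front of the old ones. With
`e'_k` the elementary symmetric polynomials in the old variables, `e_k = e'_k + X_0 e'_(k-1)` and
`X_0` is a root of `∏ i, (T - X_i)`; hence `R[e', X_0] = R[e, X_0]` is spanned over `R` both by the
`e'^a X_0^m` and by the `e^b X_0^j` with `j ≤ n`. The latter are linearly independent: the `e^b` are
(fundamental theorem of symmetric polynomials), and a polynomial of degree `≤ n` with symmetric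
coefficients that vanishes at `X_0` vanishes at all `n + 1` variables. Multiplying by the staircase
monomials in the old variables turns the old basis `e'^a X_0^m X^k` into the new one.
-/

open MvPolynomial

namespace Module.Basis

variable {R : Type*}

theorem exists_basis_mul_of_basis_mul {A ι ι' κ : Type*} [CommSemiring R] [Semiring A]
    [Algebra R A] {U : Submodule R A} (bU : Basis ι R U) (bV : Basis ι' R U) (w : κ → A)
    (B : Basis (ι × κ) R A) (hB : ∀ p, B p = bU p.1 * w p.2) :
    ∃ B' : Basis (ι' × κ) R A, ∀ p, B' p = bV p.1 * w p.2 := by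
  -- `B` identifies `A` with `κ →₀ U` via `x ↦ ∑ k, x k * w k`
  let e : (κ →₀ U) ≃ₗ[R] A := (Finsupp.basis fun _ => bU).equiv B
    ((Equiv.sigmaEquivProd κ ι).trans (Equiv.prodComm κ ι))
  have he : ∀ k (x : U), e (Finsupp.single k x) = x * w k := by
    intro k
    refine LinearMap.congr_fun (bU.ext (f₁ := e.toLinearMap ∘ₗ Finsupp.lsingle k)
      (f₂ := LinearMap.mulRight R (w k) ∘ₗ U.subtype) fun i => ?_)
    have := (Finsupp.basis fun _ => bU).equiv_apply ⟨k, i⟩ B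
      ((Equiv.sigmaEquivProd κ ι).trans (Equiv.prodComm κ ι))
    rw [Finsupp.coe_basis] at this
    exact this.trans (hB (i, k))
  refine ⟨((Finsupp.basis fun _ => bV).map e).reindex
    ((Equiv.sigmaEquivProd κ ι').trans (Equiv.prodComm κ ι')), fun p => ?_⟩
  simp [Finsupp.coe_basis, he]

theorem exists_basis_quotient_span_image {ι M : Type*} [Ring R] [AddCommGroup M] [Module R M]
    (B : Basis ι R M) (s : Set ι) :
    ∃ b : Basis ↥sᶜ R (M ⧸ Submodule.span R (B '' s)),
      ∀ i, b i = Submodule.Quotient.mk (B i) := by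
  have hli : LinearIndependent R fun i : ↥sᶜ => B i :=
    B.linearIndependent.comp _ Subtype.val_injective
  have hcompl : IsCompl (Submodule.span R (B '' s))
      (Submodule.span R (Set.range fun i : ↥sᶜ => B i)) := by
    rw [← Set.image_eq_range]
    refine ⟨B.linearIndependent.disjoint_span_image disjoint_compl_right, ?_⟩
    rw [codisjoint_iff, ← Submodule.span_union, ← Set.image_union, Set.union_compl_self,
      Set.image_univ, B.span_eq]
  exact ⟨(Basis.span hli).map (Submodule.quotientEquivOfIsCompl _ _ hcompl).symm,
    fun i => by simp [Basis.span_apply]⟩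

end Module.Basis

theorem Algebra.adjoin_le_span_of_mul_mem {R A ι : Type*} [CommSemiring R] [Semiring A]
    [Algebra R A] {S : Set A} {f : ι → A} (h1 : 1 ∈ Submodule.span R (Set.range f))
    (hmul : ∀ s ∈ S, ∀ i, s * f i ∈ Submodule.span R (Set.range f)) :
    Subalgebra.toSubmodule (Algebra.adjoin R S) ≤ Submodule.span R (Set.range f) := by
  set N := Submodule.span R (Set.range f)
  have hgen : ∀ s ∈ S, ∀ y ∈ N, s * y ∈ N := fun s hs y hy => by
    induction hy using Submodule.span_induction with
    | mem y hy => obtain ⟨i, rfl⟩ := hy; exact hmul s hs i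
    | zero => simp
    | add y z _ _ hy hz => rw [mul_add]; exact N.add_mem hy hz
    | smul r y _ hy => rw [mul_smul_comm]; exact N.smul_mem r hy
  intro a ha
  suffices ∀ y ∈ N, a * y ∈ N by simpa using this 1 h1
  induction ha using Algebra.adjoin_induction with
  | mem s hs => exact hgen s hs
  | algebraMap r => intro y hy; rw [← Algebra.smul_def]; exact N.smul_mem r hy
  | add a b _ _ ha hb => intro y hy; rw [add_mul]; exact N.add_mem (ha y hy) (hb y hy)
  | mul a b _ _ ha hb => intro y hy; rw [mul_assoc]; exact ha _ (hb y hy)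

theorem Multiset.esymm_cons {R : Type*} [CommSemiring R] (a : R) (s : Multiset R) (k : ℕ) :
    (a ::ₘ s).esymm (k + 1) = s.esymm (k + 1) + a * s.esymm k := by
  simp [Multiset.esymm, Multiset.powersetCard_cons, Multiset.sum_map_mul_left]

def Staircase (n : ℕ) : Type :=
  {k : Fin n → ℕ // ∀ i : Fin n, k i ≤ n - 1 - (i : ℕ)}

namespace Staircase

instance (n : ℕ) : Zero (Staircase n) := ⟨⟨0, fun _ => Nat.zero_le _⟩⟩

@[simp]
theorem coe_zero (n : ℕ) : (0 : Staircase n).1 = 0 := rfl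

instance : Unique (Staircase 0) where
  default := 0
  uniq _ := Subtype.ext (funext finZeroElim)

def consEquiv (n : ℕ) : Fin (n + 1) × Staircase n ≃ Staircase (n + 1) where
  toFun p := ⟨Fin.cons (p.1 : ℕ) p.2.1, Fin.cases (by simpa using p.1.is_le)
    fun i => by simpa using (p.2.2 i).trans (by omega)⟩
  invFun κ := (⟨κ.1 0, by have := κ.2 0; simp at this; omega⟩,
    ⟨Fin.tail κ.1, fun i => by have := κ.2 i.succ; simp [Fin.tail] at this ⊢; omega⟩)
  left_inv p := by
    refine Prod.ext (Fin.ext ?_) (Subtype.ext ?_)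
    · exact Fin.cons_zero (α := fun _ => ℕ) (p.1 : ℕ) p.2.1
    · exact Fin.tail_cons (α := fun _ => ℕ) (p.1 : ℕ) p.2.1
  right_inv κ := Subtype.ext (Fin.cons_self_tail κ.1)

@[simp]
theorem coe_consEquiv {n : ℕ} (j : Fin (n + 1)) (k : Staircase n) :
    (consEquiv n (j, k)).1 = Fin.cons (j : ℕ) k.1 := rfl

end Staircase

namespace MvPolynomial

section CommSemiring

variable {R : Type*} [CommSemiring R]

variable (R) in
noncomputable def esymmPow (n : ℕ) (b : Fin n → ℕ) : MvPolynomial (Fin n) R :=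
  ∏ i : Fin n, esymm (Fin n) R (i + 1) ^ b i

theorem esymm_mul_esymmPow {n : ℕ} (i : Fin n) (b : Fin n → ℕ) :
    esymm (Fin n) R (i + 1) * esymmPow R n b = esymmPow R n (b + Pi.single i 1) := by
  simp only [esymmPow, Pi.add_apply, pow_add, Finset.prod_mul_distrib]
  rw [mul_comm]
  congr 1
  rw [Finset.prod_eq_single i (fun j _ hj => by rw [Pi.single_eq_of_ne hj, pow_zero]) (by simp)]
  simp

theorem esymmPow_mem {n : ℕ} {S : Subalgebra R (MvPolynomial (Fin n) R)}
    (h : ∀ i : Fin n, esymm (Fin n) R (i + 1) ∈ S) (b : Fin n → ℕ) : esymmPow R n b ∈ S :=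
  prod_mem fun i _ => pow_mem (h i) _

theorem esymm_eq_zero_of_card_lt {σ : Type*} [Fintype σ] {k : ℕ} (h : Fintype.card σ < k) :
    esymm σ R k = 0 := by
  rw [esymm, Finset.powersetCard_eq_empty.2 (by simpa using h), Finset.sum_empty]

theorem esymm_mem_adjoin_esymm (m k : ℕ) :
    esymm (Fin m) R k ∈
      Algebra.adjoin R (Set.range fun i : Fin m => esymm (Fin m) R (i + 1)) := by
  rcases k with _ | k
  · simp
  · by_cases hk : k < m
    · exact Algebra.subset_adjoin ⟨⟨k, hk⟩, rfl⟩
    · rw [esymm_eq_zero_of_card_lt (by simp; omega)]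
      exact Subalgebra.zero_mem _

theorem esymm_fin_succ (n k : ℕ) :
    esymm (Fin (n + 1)) R (k + 1) =
      rename Fin.succ (esymm (Fin n) R (k + 1)) + X 0 * rename Fin.succ (esymm (Fin n) R k) := by
  have hrename : ∀ j, rename Fin.succ (esymm (Fin n) R j) =
      ((Finset.univ.map (Fin.succEmb n)).val.map X).esymm j := fun j => by
    rw [Finset.map_val, Multiset.map_map, Finset.esymm_map_val]
    simp only [esymm, map_sum, map_prod, rename_X]
    rfl
  rw [hrename, hrename, esymm_eq_multiset_esymm, Fin.univ_succ, Finset.cons_val,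
    Multiset.map_cons, Multiset.esymm_cons]
  rfl

theorem finSuccEquiv_rename_succ (n : ℕ) (p : MvPolynomial (Fin n) R) :
    finSuccEquiv R n (rename Fin.succ p) = Polynomial.C p := by
  induction p using MvPolynomial.induction_on with
  | C a => simp [finSuccEquiv_apply]
  | add p q hp hq => simp [hp, hq]
  | mul_X p i hp => simp [hp, finSuccEquiv_X_succ]

theorem exists_basis_rename_succ_mul_X_zero_pow {ι : Type*} {n : ℕ}
    (B : Module.Basis ι R (MvPolynomial (Fin n) R)) :
    ∃ B' : Module.Basis (ι × ℕ) R (MvPolynomial (Fin (n + 1)) R),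
      ∀ p, B' p = rename Fin.succ (B p.1) * X 0 ^ p.2 := by
  refine ⟨(B.smulTower (Polynomial.basisMonomials _)).map
    (finSuccEquiv R n).symm.toLinearEquiv, fun p => ?_⟩
  apply (finSuccEquiv R n).injective
  simp [finSuccEquiv_rename_succ, finSuccEquiv_X_zero, Polynomial.smul_monomial,
    Polynomial.C_mul_X_pow_eq_monomial]

theorem span_rename_esymmPow_mul_X_pow_eq_adjoin (n : ℕ) :
    Submodule.span R (Set.range fun p : (Fin n → ℕ) × ℕ =>
      rename Fin.succ (esymmPow R n p.1) * X 0 ^ p.2) =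
    Subalgebra.toSubmodule (Algebra.adjoin R
      (insert (X 0) (Set.range fun i : Fin n => rename Fin.succ (esymm (Fin n) R (i + 1))))) := by
  apply le_antisymm
  · rw [Submodule.span_le, Subalgebra.coe_toSubmodule]
    rintro _ ⟨⟨a, m⟩, rfl⟩
    exact mul_mem (esymmPow_mem (S := (Algebra.adjoin R _).comap (rename Fin.succ))
      (fun i => Algebra.subset_adjoin (Set.mem_insert_of_mem _ (Set.mem_range_self i))) a)
      (pow_mem (Algebra.subset_adjoin (Set.mem_insert _ _)) _)
  apply Algebra.adjoin_le_span_of_mul_mem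
  · exact Submodule.subset_span ⟨(0, 0), by simp [esymmPow]⟩
  rintro _ (rfl | ⟨i, rfl⟩) ⟨a, m⟩ <;> dsimp only
  · exact Submodule.subset_span ⟨(a, m + 1), by simp only; ring⟩
  · exact Submodule.subset_span ⟨(a + Pi.single i 1, m), by
      simp only [← esymm_mul_esymmPow, map_mul, mul_assoc]⟩

theorem restrictScalars_span_esymm_eq {n : ℕ}
    (B : Module.Basis ((Fin n → ℕ) × Staircase n) R (MvPolynomial (Fin n) R))
    (hB : ∀ p, B p = esymmPow R n p.1 * ∏ i, X i ^ p.2.1 i) :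
    (Ideal.span (Set.range fun i : Fin n => esymm (Fin n) R (i + 1))).restrictScalars R =
      Submodule.span R (B '' {p | p.1 ≠ 0}) := by
  apply le_antisymm
  · intro x hx
    obtain ⟨c, rfl⟩ := Ideal.mem_span_range_iff_exists_fun.1 hx
    refine Submodule.sum_mem _ fun i _ => ?_
    have hc : c i * esymm (Fin n) R (i + 1) ∈
        Submodule.span R (Set.range B) * Submodule.span R {esymm (Fin n) R (i + 1)} :=
      Submodule.mul_mem_mul (by simp [B.span_eq]) (Submodule.subset_span rfl)
    rw [Submodule.span_mul_span] at hc
    refine Submodule.span_mono ?_ hc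
    rintro _ ⟨_, ⟨p, rfl⟩, _, rfl, rfl⟩
    refine ⟨(p.1 + Pi.single i 1, p.2), fun h => by simpa using congrFun h i, ?_⟩
    rw [hB, hB, ← esymm_mul_esymmPow]
    ring
  · rw [Submodule.span_le]
    rintro _ ⟨p, hp, rfl⟩
    obtain ⟨i, hi⟩ := Function.ne_iff.1 hp
    rw [hB]
    exact Ideal.mul_mem_right _ _ (Ideal.mem_of_dvd _
      ((dvd_pow_self _ hi).trans (Finset.dvd_prod_of_mem _ (Finset.mem_univ i)))
      (Ideal.subset_span ⟨i, rfl⟩))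

end CommSemiring

section CommRing

variable {R : Type*} [CommRing R]

theorem sum_esymm_mul_X_pow_eq_zero {σ : Type*} [Fintype σ] (i : σ) :
    ∑ j ∈ Finset.range (Fintype.card σ + 1),
      (-1) ^ j * (esymm σ R j * X i ^ (Fintype.card σ - j)) = 0 := by
  have := congrArg (Polynomial.eval (X i : MvPolynomial σ R))
    (Multiset.prod_X_sub_X_eq_sum_esymm (Finset.univ.val.map X))
  rw [Polynomial.eval_multiset_prod, Multiset.prod_eq_zero] at this
  · simpa [Polynomial.eval_finsetSum, ← esymm_eq_multiset_esymm] using this.symm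
  · simpa using ⟨i, sub_self _⟩

theorem esymmPow_mul_X_pow_succ_mem_span (n : ℕ) (b : Fin (n + 1) → ℕ) :
    esymmPow R (n + 1) b * X 0 ^ (n + 1) ∈
      Submodule.span R (Set.range fun p : (Fin (n + 1) → ℕ) × Fin (n + 1) =>
        esymmPow R (n + 1) p.1 * X 0 ^ (p.2 : ℕ)) := by
  set N := Submodule.span R (Set.range fun p : (Fin (n + 1) → ℕ) × Fin (n + 1) =>
      esymmPow R (n + 1) p.1 * X 0 ^ (p.2 : ℕ))
  have hsign : ∀ k, ∀ y ∈ N, (-1 : MvPolynomial (Fin (n + 1)) R) ^ k * y ∈ N := fun k y hy => by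
    rcases neg_one_pow_eq_or (MvPolynomial (Fin (n + 1)) R) k with h | h <;>
      simp [h, hy, N.neg_mem]
  have hroot := sum_esymm_mul_X_pow_eq_zero (R := R) (0 : Fin (n + 1))
  rw [Fintype.card_fin, Finset.sum_range_succ'] at hroot
  simp only [pow_zero, one_mul, esymm_zero, Nat.sub_zero] at hroot
  rw [eq_neg_of_add_eq_zero_right hroot, mul_neg, Finset.mul_sum]
  refine N.neg_mem (Submodule.sum_mem _ fun k hk => ?_)
  rw [Finset.mem_range] at hk
  have heq : esymmPow R (n + 1) b * ((-1) ^ (k + 1) *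
      (esymm (Fin (n + 1)) R (k + 1) * X 0 ^ (n + 1 - (k + 1)))) =
      (-1) ^ (k + 1) * (esymmPow R (n + 1) (b + Pi.single ⟨k, hk⟩ 1) * X 0 ^ (n - k)) := by
    rw [← esymm_mul_esymmPow, Nat.add_sub_add_right]
    ring
  rw [heq]
  exact hsign _ _ (Submodule.subset_span ⟨(_, ⟨n - k, by omega⟩), rfl⟩)

theorem span_esymmPow_mul_X_pow_eq_adjoin (n : ℕ) :
    Submodule.span R (Set.range fun p : (Fin (n + 1) → ℕ) × Fin (n + 1) =>
      esymmPow R (n + 1) p.1 * X 0 ^ (p.2 : ℕ)) =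
    Subalgebra.toSubmodule (Algebra.adjoin R
      (insert (X 0) (Set.range fun i : Fin (n + 1) => esymm (Fin (n + 1)) R (i + 1)))) := by
  apply le_antisymm
  · rw [Submodule.span_le, Subalgebra.coe_toSubmodule]
    rintro _ ⟨⟨b, j⟩, rfl⟩
    exact mul_mem (esymmPow_mem
      (fun i => Algebra.subset_adjoin (Set.mem_insert_of_mem _ (Set.mem_range_self i))) b)
      (pow_mem (Algebra.subset_adjoin (Set.mem_insert _ _)) _)
  apply Algebra.adjoin_le_span_of_mul_mem
  · exact Submodule.subset_span ⟨(0, 0), by simp [esymmPow]⟩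
  rintro _ (rfl | ⟨i, rfl⟩) ⟨b, j⟩ <;> dsimp only
  · rcases Nat.lt_or_eq_of_le (Nat.le_of_lt_succ j.isLt) with hj | hj
    · exact Submodule.subset_span ⟨(b, ⟨j + 1, by omega⟩), by simp only; ring⟩
    · rw [hj, mul_left_comm, ← pow_succ']
      exact esymmPow_mul_X_pow_succ_mem_span n b
  · exact Submodule.subset_span ⟨(b + Pi.single i 1, j), by
      simp only [← esymm_mul_esymmPow, mul_assoc]⟩

theorem adjoin_X_zero_esymm_eq_adjoin_X_zero_rename_esymm (n : ℕ) :
    Algebra.adjoin R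
      (insert (X 0) (Set.range fun i : Fin (n + 1) => esymm (Fin (n + 1)) R (i + 1))) =
    Algebra.adjoin R
      (insert (X 0) (Set.range fun i : Fin n => rename Fin.succ (esymm (Fin n) R (i + 1)))) := by
  apply le_antisymm
  · have hrename : ∀ k, rename Fin.succ (esymm (Fin n) R k) ∈ Algebra.adjoin R
        (insert (X 0) (Set.range fun i : Fin n => rename Fin.succ (esymm (Fin n) R (i + 1)))) := by
      intro k
      have h : rename Fin.succ (esymm (Fin n) R k) ∈ (Algebra.adjoin R
          (Set.range fun i : Fin n => esymm (Fin n) R (i + 1))).map (rename Fin.succ) :=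
        Subalgebra.mem_map.2 ⟨_, esymm_mem_adjoin_esymm n k, rfl⟩
      rw [← Algebra.adjoin_image, ← Set.range_comp] at h
      exact Algebra.adjoin_mono (Set.subset_insert _ _) h
    rw [Algebra.adjoin_le_iff]
    rintro _ (rfl | ⟨i, rfl⟩)
    · exact Algebra.subset_adjoin (Set.mem_insert _ _)
    · dsimp only
      rw [esymm_fin_succ]
      exact add_mem (hrename _) (mul_mem (Algebra.subset_adjoin (Set.mem_insert _ _)) (hrename _))
  · have hrename : ∀ k, rename Fin.succ (esymm (Fin n) R k) ∈ Algebra.adjoin R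
        (insert (X 0) (Set.range fun i : Fin (n + 1) => esymm (Fin (n + 1)) R (i + 1))) := by
      intro k
      induction k with
      | zero => simp
      | succ k ih =>
        rw [eq_sub_of_add_eq (esymm_fin_succ (R := R) n k).symm]
        exact sub_mem (Algebra.adjoin_mono (Set.subset_insert _ _) (esymm_mem_adjoin_esymm _ _))
          (mul_mem (Algebra.subset_adjoin (Set.mem_insert _ _)) ih)
    rw [Algebra.adjoin_le_iff]
    rintro _ (rfl | ⟨i, rfl⟩)
    · exact Algebra.subset_adjoin (Set.mem_insert _ _)
    · exact hrename _

theorem span_esymmPow_mul_X_pow_eq_span_rename (n : ℕ) :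
    Submodule.span R (Set.range fun p : (Fin (n + 1) → ℕ) × Fin (n + 1) =>
      esymmPow R (n + 1) p.1 * X 0 ^ (p.2 : ℕ)) =
    Submodule.span R (Set.range fun p : (Fin n → ℕ) × ℕ =>
      rename Fin.succ (esymmPow R n p.1) * X 0 ^ p.2) := by
  rw [span_esymmPow_mul_X_pow_eq_adjoin, span_rename_esymmPow_mul_X_pow_eq_adjoin,
    adjoin_X_zero_esymm_eq_adjoin_X_zero_rename_esymm]

variable [IsDomain R]

theorem linearIndependent_X_pow_symmetricSubalgebra {m : ℕ} (i₀ : Fin m) :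
    LinearIndependent (symmetricSubalgebra (Fin m) R)
      fun j : Fin m => (X i₀ : MvPolynomial (Fin m) R) ^ (j : ℕ) := by
  rw [Fintype.linearIndependent_iff]
  intro g hg
  -- each `X i` is a root of `∑ j, g j * T ^ j`, whose coefficients are symmetric
  have hroots : (Matrix.vandermonde (X : Fin m → MvPolynomial (Fin m) R)).mulVec
      (fun j => g j) = 0 := by
    funext i
    have := congrArg (rename (Equiv.swap i₀ i)) hg
    simpa [Matrix.mulVec, dotProduct, map_sum, Subalgebra.smul_def, (g _).2 (Equiv.swap i₀ i),
      mul_comm] using this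
  have := Matrix.eq_zero_of_mulVec_eq_zero
    (Matrix.det_vandermonde_ne_zero_iff.2 (X_injective (σ := Fin m) (R := R))) hroots
  exact fun j => Subtype.ext (congrFun this j)

theorem linearIndependent_esymmPow_mul_X_pow {m : ℕ} (i₀ : Fin m) :
    LinearIndependent R fun p : (Fin m → ℕ) × Fin m =>
      esymmPow R m p.1 * X i₀ ^ (p.2 : ℕ) := by
  have hb : LinearIndependent R fun b : Fin m → ℕ =>
      esymmAlgHom (Fin m) R m (monomial (Finsupp.equivFunOnFinite.symm b) 1) :=
    ((basisMonomials _ R).linearIndependent.comp _ Finsupp.equivFunOnFinite.symm.injective).map'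
      (esymmAlgHom (Fin m) R m).toLinearMap
      (LinearMap.ker_eq_bot.2 (esymmAlgHom_fin_injective R le_rfl))
  convert linearIndependent_smul hb (linearIndependent_X_pow_symmetricSubalgebra i₀) using 1
  funext p
  rw [Subalgebra.smul_def, esymmAlgHom_apply, aeval_monomial, map_one, one_mul,
    Finsupp.prod_fintype _ _ fun _ => pow_zero _]
  rfl

theorem exists_basis_esymmPow_mul_prod_X_pow_succ {n : ℕ}
    (B : Module.Basis ((Fin n → ℕ) × Staircase n) R (MvPolynomial (Fin n) R))
    (hB : ∀ p, B p = esymmPow R n p.1 * ∏ i, X i ^ p.2.1 i) :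
    ∃ B' : Module.Basis ((Fin (n + 1) → ℕ) × Staircase (n + 1)) R
        (MvPolynomial (Fin (n + 1)) R),
      ∀ p, B' p = esymmPow R (n + 1) p.1 * ∏ i, X i ^ p.2.1 i := by
  set u := fun p : (Fin n → ℕ) × ℕ => rename Fin.succ (esymmPow R n p.1) * X 0 ^ p.2
  set w := fun k : Staircase n => rename (R := R) Fin.succ (∏ i, X i ^ k.1 i)
  obtain ⟨B₁, hB₁⟩ := exists_basis_rename_succ_mul_X_zero_pow B
  let B₂ := B₁.reindex
    { toFun := fun p => ((p.1.1, p.2), p.1.2), invFun := fun p => ((p.1.1, p.2), p.1.2),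
      left_inv := fun _ => rfl, right_inv := fun _ => rfl }
  have hB₂ : ∀ p, B₂ p = u p.1 * w p.2 := by
    rintro ⟨⟨a, m⟩, k⟩
    simp [B₂, hB₁, hB, u, w, map_mul]
    ring
  have hu : LinearIndependent R u := by
    have := B₂.linearIndependent.comp (fun p => (p, 0)) fun p q h => congrArg Prod.fst h
    simpa [Function.comp_def, hB₂, w] using this
  obtain ⟨B₃, hB₃⟩ := Module.Basis.exists_basis_mul_of_basis_mul (Module.Basis.span hu)
    ((Module.Basis.span (linearIndependent_esymmPow_mul_X_pow (R := R) 0)).map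
      (LinearEquiv.ofEq _ _ (span_esymmPow_mul_X_pow_eq_span_rename n))) w B₂
    (fun p => by simp [hB₂, Module.Basis.span_apply])
  refine ⟨B₃.reindex ((Equiv.prodAssoc _ _ _).trans
    ((Equiv.refl _).prodCongr (Staircase.consEquiv n))), ?_⟩
  rintro ⟨b, κ⟩
  obtain ⟨⟨j, k⟩, rfl⟩ := (Staircase.consEquiv n).surjective κ
  simp [hB₃, Module.Basis.span_apply, w, Fin.prod_univ_succ, mul_assoc]

theorem exists_basis_esymmPow_mul_prod_X_pow (n : ℕ) :
    ∃ B : Module.Basis ((Fin n → ℕ) × Staircase n) R (MvPolynomial (Fin n) R),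
      ∀ p, B p = esymmPow R n p.1 * ∏ i, X i ^ p.2.1 i := by
  induction n with
  | zero =>
    exact ⟨((Module.Basis.singleton _ R).reindex (Equiv.prodUnique _ _).symm).map
      (isEmptyAlgEquiv R (Fin 0)).symm.toLinearEquiv, fun p => by simp [esymmPow]⟩
  | succ n ih =>
    obtain ⟨B, hB⟩ := ih
    exact exists_basis_esymmPow_mul_prod_X_pow_succ B hB

theorem exists_basis_quotient_span_esymm (n : ℕ) :
    ∃ b : Module.Basis (Staircase n) R (MvPolynomial (Fin n) R ⧸
        Ideal.span (Set.range fun i : Fin n => esymm (Fin n) R (i + 1))),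
      ∀ k, b k = Ideal.Quotient.mk _ (∏ i, X i ^ k.1 i) := by
  obtain ⟨B, hB⟩ := exists_basis_esymmPow_mul_prod_X_pow (R := R) n
  obtain ⟨b, hb⟩ := B.exists_basis_quotient_span_image {p | p.1 ≠ 0}
  let e : ↥{p : (Fin n → ℕ) × Staircase n | p.1 ≠ 0}ᶜ ≃ Staircase n :=
    { toFun := fun p => p.1.2
      invFun := fun k => ⟨(0, k), by simp⟩
      left_inv := fun p => Subtype.ext (Prod.ext (not_not.1 p.2).symm rfl)
      right_inv := fun _ => rfl }
  refine ⟨(b.reindex e).map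
    ((Submodule.quotEquivOfEq _ _ (restrictScalars_span_esymm_eq B hB).symm).trans
      (Submodule.Quotient.restrictScalarsEquiv R _)), fun k => ?_⟩
  simp [e, hb, hB, esymmPow]

end CommRing

end MvPolynomial

/-- `H_n = ℤ[X_1, …, X_n]/⟨e_1, …, e_n⟩` is a free `ℤ`-module with basis the
classes of the monomials `X_1^{k_1} ⋯ X_n^{k_n}` with `k_i ≤ n - i` (written 0-indexed:
the exponent of `X_i` is at most `n - 1 - i`). -/
theorem coinvariant_monomial_basis (n : ℕ) :
    ∃ b : Module.Basis {k : Fin n → ℕ // ∀ i : Fin n, k i ≤ n - 1 - (i : ℕ)} ℤ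
      (MvPolynomial (Fin n) ℤ ⧸
        Ideal.span (Set.range fun k : Fin n => MvPolynomial.esymm (Fin n) ℤ ((k : ℕ) + 1))),
      ∀ kk, b kk =
        Ideal.Quotient.mk
          (Ideal.span (Set.range fun k : Fin n => MvPolynomial.esymm (Fin n) ℤ ((k : ℕ) + 1)))
          (∏ i : Fin n, X i ^ (kk.1 i)) :=
  exists_basis_quotient_span_esymm n
end
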